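/- Let δ : ℤ → ℝ be a sequence with δ n > 0 for all n. Then there exists M ≥ 1 such that δ satisfies the quasisymmetric shear condition with constant M if and only if there exists M′ ≥ 1 such that the piecewise linear developing map h_δ satisfies the M′-quasisymmetry condition. Quantitatively: if h_δ satisfies the M′-quasisymmetry condition, then δ satisfies the quasisymmetric shear condition with constant M′; and if δ satisfies the quasisymmetric shear condition with constant M, then h_δ satisfies the M′-quasisymmetry condition with M′ = max(3M³, M¹⁰). -/

import Mathlib

/-- `Hmap δ n` is the value at the integer `n` of the developing map:
`H 0 = 0`, `H (n+1) = H n + δ n`. -/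
noncomputable def Hmap (δ : ℤ → ℝ) (n : ℤ) : ℝ :=
  if 0 ≤ n then ∑ j ∈ Finset.range n.toNat, δ j
  else -∑ j ∈ Finset.range (-n).toNat, δ (n + j)

/-- The piecewise linear developing map associated to the sequence `δ`. -/
noncomputable def hdev (δ : ℤ → ℝ) (x : ℝ) : ℝ :=
  Hmap δ ⌊x⌋ + δ ⌊x⌋ * (x - (⌊x⌋ : ℝ))

/-- The quasisymmetric shear condition with constant `M` for a positive sequence `δ`:
`1/M ≤ (δ m + ⋯ + δ (m+k)) / (δ (m-1) + ⋯ + δ (m-k-1)) ≤ M`. -/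
def ShearQS (δ : ℤ → ℝ) (M : ℝ) : Prop :=
  ∀ (m : ℤ) (k : ℕ),
    1 / M ≤ (∑ i ∈ Finset.range (k + 1), δ (m + (i : ℤ))) /
        (∑ i ∈ Finset.range (k + 1), δ (m - 1 - (i : ℤ))) ∧
      (∑ i ∈ Finset.range (k + 1), δ (m + (i : ℤ))) /
        (∑ i ∈ Finset.range (k + 1), δ (m - 1 - (i : ℤ))) ≤ M

/-- The `M`-quasisymmetry condition for a map `h : ℝ → ℝ`. -/
def QSCond (h : ℝ → ℝ) (M : ℝ) : Prop :=
  ∀ (x t : ℝ), 0 < t →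
    1 / M ≤ (h (x + t) - h x) / (h x - h (x - t)) ∧
      (h (x + t) - h x) / (h x - h (x - t)) ≤ M

/-! On the integers `hdev δ` is the partial-sum map `Hmap δ`, so the quasisymmetry inequality at
`x = m`, `t = k + 1` is literally the shear condition at `(m, k)`.

Conversely, let `n = ⌊x⌋`, `a = ⌊x - t⌋`, `b = ⌊x + t⌋`; then `b - n ≤ (n - a) + 1`.
If `a ≥ n - 1`, then `t < 2` and the two increments of `hdev δ` are `t` times slopes within the
factors `M²` and `M` of `δ n`. Otherwise both increments are squeezed between sums of consecutive
`δ`'s centred at `n` (at `n + 1` when `b - n = n - a + 1`, in which case `x` lies in the right half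
of its unit interval); the shear condition compares these sums, and the at most two surplus terms
are absorbed by `δ (m - 1) ≤ M * δ m`, which costs a factor `1 + M + M²`. This gives the constant
`3 M³`. The reverse inequality is the same bound for the reflected sequence `m ↦ δ (-1 - m)`, whose
developing map is `x ↦ -hdev δ (-x)`. -/

open Finset

theorem floor_add_add_floor_sub_le (x t : ℝ) : ⌊x + t⌋ + ⌊x - t⌋ ≤ 2 * ⌊x⌋ + 1 := by
  have h : ((⌊x + t⌋ + ⌊x - t⌋ : ℤ) : ℝ) < (2 * ⌊x⌋ + 2 : ℤ) := by
    push_cast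
    linarith [Int.floor_le (x + t), Int.floor_le (x - t), Int.lt_floor_add_one x]
  have := Int.cast_lt.1 h
  omega

theorem one_div_le_div_and_div_le_iff {A B M : ℝ} (hB : 0 < B) (hM : 0 < M) :
    (1 / M ≤ A / B ∧ A / B ≤ M) ↔ (B ≤ M * A ∧ A ≤ M * B) := by
  rw [div_le_div_iff₀ hM hB, div_le_iff₀ hB, one_mul, mul_comm A M]

theorem one_div_le_inv_and_inv_le {r M : ℝ} (hM : 0 < M) (h : 1 / M ≤ r ∧ r ≤ M) :
    1 / M ≤ r⁻¹ ∧ r⁻¹ ≤ M := by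
  rw [one_div] at h ⊢
  have hr : 0 < r := (inv_pos.2 hM).trans_le h.1
  exact ⟨inv_anti₀ hr h.2, inv_le_of_inv_le₀ hM h.1⟩

theorem Hmap_zero (δ : ℤ → ℝ) : Hmap δ 0 = 0 := by simp [Hmap]

theorem Hmap_succ (δ : ℤ → ℝ) (n : ℤ) : Hmap δ (n + 1) = Hmap δ n + δ n := by
  rcases le_or_gt 0 n with h | h
  · rw [Hmap, Hmap, if_pos h, if_pos (by omega), show (n + 1).toNat = n.toNat + 1 by omega,
      sum_range_succ, Int.toNat_of_nonneg h]
  rcases (show n = -1 ∨ n + 1 < 0 by omega) with rfl | h'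
  · simp [Hmap]
  rw [Hmap, Hmap, if_neg (by omega), if_neg (by omega),
    show (-n).toNat = (-(n + 1)).toNat + 1 by omega, sum_range_succ']
  simp only [Nat.cast_add, Nat.cast_one, Nat.cast_zero, add_zero, ← add_assoc, add_right_comm n]
  ring

theorem Hmap_succ_sub_one (δ : ℤ → ℝ) (m : ℤ) : Hmap δ m - Hmap δ (m - 1) = δ (m - 1) := by
  rw [← sub_add_cancel m 1, Hmap_succ, add_sub_cancel_right]
  ring

theorem eq_Hmap_of_succ {δ g : ℤ → ℝ} (h0 : g 0 = 0) (hsucc : ∀ n, g (n + 1) = g n + δ n) :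
    g = Hmap δ := by
  funext n
  induction n using Int.induction_on with
  | zero => rw [h0, Hmap_zero]
  | succ k ih => rw [hsucc, Hmap_succ, ih]
  | pred k ih =>
    have hg := hsucc (-(k : ℤ) - 1)
    have hH := Hmap_succ δ (-(k : ℤ) - 1)
    rw [sub_add_cancel] at hg hH
    linarith

theorem Hmap_mul_add (δ : ℤ → ℝ) (a c : ℝ) (n : ℤ) :
    Hmap (fun m => a * δ m + c) n = a * Hmap δ n + c * n := by
  refine congrFun (eq_Hmap_of_succ (g := fun n => a * Hmap δ n + c * n) ?_ fun n => ?_).symm n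
  · simp [Hmap_zero]
  · simp only [Hmap_succ]; push_cast; ring

theorem Hmap_reflect (δ : ℤ → ℝ) (n : ℤ) :
    Hmap (fun m => δ (-1 - m)) n = -Hmap δ (-n) := by
  refine congrFun (eq_Hmap_of_succ (g := fun n => -Hmap δ (-n)) ?_ fun n => ?_).symm n
  · simp [Hmap_zero]
  · have h := Hmap_succ δ (-(n + 1))
    rw [show -(n + 1) + 1 = -n by ring] at h
    simp only [h, show -1 - n = -(n + 1) by ring]
    ring

theorem Hmap_add_sub_Hmap (δ : ℤ → ℝ) (m : ℤ) (k : ℕ) :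
    Hmap δ (m + k) - Hmap δ m = ∑ i ∈ range k, δ (m + i) := by
  induction k with
  | zero => simp
  | succ k ih =>
    rw [sum_range_succ, ← ih, Nat.cast_succ, ← add_assoc, Hmap_succ]
    ring

theorem Hmap_sub_Hmap_sub (δ : ℤ → ℝ) (m : ℤ) (k : ℕ) :
    Hmap δ m - Hmap δ (m - k) = ∑ i ∈ range k, δ (m - 1 - i) := by
  induction k with
  | zero => simp
  | succ k ih =>
    have h := Hmap_succ δ (m - (k + 1))
    rw [show m - (k + 1) + 1 = m - k by ring] at h
    rw [sum_range_succ, ← ih, Nat.cast_succ, show m - 1 - k = m - (k + 1) by ring]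
    linarith

theorem Hmap_strictMono {δ : ℤ → ℝ} (hpos : ∀ n, 0 < δ n) : StrictMono (Hmap δ) :=
  strictMono_int_of_lt_succ fun n => by rw [Hmap_succ]; linarith [hpos n]

theorem le_Hmap_sub_Hmap_sub {δ : ℤ → ℝ} (hpos : ∀ n, 0 < δ n) (m : ℤ) {j : ℤ} (hj : 0 < j) :
    δ (m - j) ≤ Hmap δ m - Hmap δ (m - j) := by
  have h := (Hmap_strictMono hpos).monotone (show m - j + 1 ≤ m by omega)
  rw [Hmap_succ] at h
  linarith

theorem hdev_intCast (δ : ℤ → ℝ) (n : ℤ) : hdev δ n = Hmap δ n := by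
  simp [hdev]

theorem hdev_eq_of_mem_Icc (δ : ℤ → ℝ) {n : ℤ} {x : ℝ} (h₁ : (n : ℝ) ≤ x) (h₂ : x ≤ n + 1) :
    hdev δ x = Hmap δ n + δ n * (x - n) := by
  rcases h₂.lt_or_eq with h₂ | rfl
  · rw [hdev, Int.floor_eq_iff.2 ⟨h₁, h₂⟩]
  · have h := hdev_intCast δ (n + 1)
    rw [Hmap_succ] at h
    push_cast at h
    rw [h]
    ring

theorem hdev_mul_add (δ : ℤ → ℝ) (a c x : ℝ) :
    hdev (fun m => a * δ m + c) x = a * hdev δ x + c * x := by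
  simp only [hdev, Hmap_mul_add]
  ring

theorem hdev_reflect (δ : ℤ → ℝ) (x : ℝ) :
    hdev (fun m => δ (-1 - m)) x = -hdev δ (-x) := by
  have h₁ : (⌊x⌋ : ℝ) ≤ x := Int.floor_le x
  have h₂ : x < ⌊x⌋ + 1 := Int.lt_floor_add_one x
  have hrefl : hdev δ (-x) = Hmap δ (-1 - ⌊x⌋) + δ (-1 - ⌊x⌋) * (-x - (-1 - ⌊x⌋ : ℤ)) :=
    hdev_eq_of_mem_Icc δ (by push_cast; linarith) (by push_cast; linarith)
  have hsucc := Hmap_succ δ (-1 - ⌊x⌋)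
  rw [show -1 - ⌊x⌋ + 1 = -⌊x⌋ by ring] at hsucc
  rw [hrefl, hdev, Hmap_reflect]
  push_cast
  linarith

theorem hdev_le_hdev_of_nonneg {δ : ℤ → ℝ} {z₁ z₂ : ℝ} (hz : z₁ ≤ z₂)
    (hδ : ∀ j, ⌊z₁⌋ ≤ j → j ≤ ⌊z₂⌋ → 0 ≤ δ j) : hdev δ z₁ ≤ hdev δ z₂ := by
  suffices ∀ k : ℕ, ∀ {z₁ z₂ : ℝ}, z₁ ≤ z₂ → ⌊z₂⌋ ≤ ⌊z₁⌋ + k →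
      (∀ j, ⌊z₁⌋ ≤ j → j ≤ ⌊z₂⌋ → 0 ≤ δ j) → hdev δ z₁ ≤ hdev δ z₂ from
    this (⌊z₂⌋ - ⌊z₁⌋).toNat hz (by omega) hδ
  intro k
  induction k with
  | zero =>
    intro z₁ z₂ hz hk hδ
    have hfl : ⌊z₂⌋ = ⌊z₁⌋ := le_antisymm (by simpa using hk) (Int.floor_le_floor hz)
    rw [hdev, hdev, hfl]
    nlinarith [hδ ⌊z₁⌋ le_rfl hfl.ge]
  | succ k ih =>
    intro z₁ z₂ hz hk hδ
    rcases (Int.floor_le_floor hz).eq_or_lt with hfl | hfl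
    · exact ih hz (by omega) hδ
    set y : ℝ := ((⌊z₁⌋ + 1 : ℤ) : ℝ)
    have hy : ⌊y⌋ = ⌊z₁⌋ + 1 := Int.floor_intCast _
    have hz₁y : z₁ < y := by push_cast [y]; exact Int.lt_floor_add_one z₁
    have hyz₂ : y ≤ z₂ := (Int.cast_le.2 hfl).trans (Int.floor_le z₂)
    calc hdev δ z₁ ≤ hdev δ y := by
          rw [hdev, hdev_eq_of_mem_Icc δ (x := y) (by push_cast [y]; linarith)
            (by push_cast [y]; rfl)]
          nlinarith [hδ ⌊z₁⌋ le_rfl hfl.le]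
      _ ≤ hdev δ z₂ := ih hyz₂ (by omega) fun j hj₁ hj₂ => hδ j (by omega) hj₂

theorem mul_sub_le_hdev_sub {δ : ℤ → ℝ} {c z₁ z₂ : ℝ} (hz : z₁ ≤ z₂)
    (hδ : ∀ j, ⌊z₁⌋ ≤ j → j ≤ ⌊z₂⌋ → c ≤ δ j) : c * (z₂ - z₁) ≤ hdev δ z₂ - hdev δ z₁ := by
  have := hdev_le_hdev_of_nonneg (δ := fun m => 1 * δ m + -c) hz fun j hj₁ hj₂ => by
    linarith [hδ j hj₁ hj₂]
  rw [hdev_mul_add, hdev_mul_add] at this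
  linarith

theorem hdev_sub_le_mul_sub {δ : ℤ → ℝ} {c z₁ z₂ : ℝ} (hz : z₁ ≤ z₂)
    (hδ : ∀ j, ⌊z₁⌋ ≤ j → j ≤ ⌊z₂⌋ → δ j ≤ c) : hdev δ z₂ - hdev δ z₁ ≤ c * (z₂ - z₁) := by
  have := hdev_le_hdev_of_nonneg (δ := fun m => -1 * δ m + c) hz fun j hj₁ hj₂ => by
    linarith [hδ j hj₁ hj₂]
  rw [hdev_mul_add, hdev_mul_add] at this
  linarith

theorem hdev_strictMono {δ : ℤ → ℝ} (hpos : ∀ n, 0 < δ n) : StrictMono (hdev δ) := by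
  intro z₁ z₂ hz
  obtain ⟨j₀, -, hj₀⟩ := (Icc ⌊z₁⌋ ⌊z₂⌋).exists_min_image δ
    ⟨⌊z₁⌋, left_mem_Icc.2 (Int.floor_le_floor hz.le)⟩
  have := mul_sub_le_hdev_sub (c := δ j₀) hz.le fun j h₁ h₂ => hj₀ j (mem_Icc.2 ⟨h₁, h₂⟩)
  nlinarith [hpos j₀]

theorem Hmap_floor_le_hdev {δ : ℤ → ℝ} (hpos : ∀ n, 0 < δ n) (x : ℝ) :
    Hmap δ ⌊x⌋ ≤ hdev δ x :=
  le_add_of_nonneg_right (mul_nonneg (hpos _).le (sub_nonneg.2 (Int.floor_le x)))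

theorem hdev_le_Hmap {δ : ℤ → ℝ} (hpos : ∀ n, 0 < δ n) {z : ℝ} {a : ℤ} (h : z ≤ a) :
    hdev δ z ≤ Hmap δ a :=
  ((hdev_strictMono hpos).monotone h).trans_eq (hdev_intCast δ a)

theorem QSCond.mono {f : ℝ → ℝ} {M M' : ℝ} (h : QSCond f M) (hM : 0 < M) (hMM' : M ≤ M') :
    QSCond f M' := fun x t ht =>
  ⟨(one_div_le_one_div_of_le hM hMM').trans (h x t ht).1, (h x t ht).2.trans hMM'⟩

theorem qsCond_of_le_mul {f : ℝ → ℝ} {M : ℝ} (hf : StrictMono f) (hM : 0 < M)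
    (h : ∀ x t, 0 < t → f (x + t) - f x ≤ M * (f x - f (x - t)) ∧
      f x - f (x - t) ≤ M * (f (x + t) - f x)) : QSCond f M := fun x t ht =>
  (one_div_le_div_and_div_le_iff (sub_pos.2 (hf (by linarith))) hM).2 (h x t ht).symm

theorem shearQS_of_qsCond_hdev {δ : ℤ → ℝ} {M : ℝ} (h : QSCond (hdev δ) M) : ShearQS δ M := by
  intro m k
  have hN := Hmap_add_sub_Hmap δ m (k + 1)
  have hD := Hmap_sub_Hmap_sub δ m (k + 1)
  rw [← hdev_intCast, ← hdev_intCast] at hN hD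
  push_cast at hN hD
  rw [← hN, ← hD]
  exact h m (k + 1) (by positivity)

namespace ShearQS

variable {δ : ℤ → ℝ} {M : ℝ}

theorem reflect (hM : 0 < M) (hs : ShearQS δ M) : ShearQS (fun m => δ (-1 - m)) M := by
  intro m k
  have hN : ∑ i ∈ range (k + 1), δ (-1 - (m + i)) = ∑ i ∈ range (k + 1), δ (-m - 1 - i) :=
    sum_congr rfl fun i _ => by ring_nf
  have hD : ∑ i ∈ range (k + 1), δ (-1 - (m - 1 - i)) = ∑ i ∈ range (k + 1), δ (-m + i) :=
    sum_congr rfl fun i _ => by ring_nf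
  rw [hN, hD]
  simpa only [inv_div] using one_div_le_inv_and_inv_le hM (hs (-m) k)

theorem Hmap_sub_le_mul_sub (hpos : ∀ n, 0 < δ n) (hM : 0 < M) (hs : ShearQS δ M) (m : ℤ) {j : ℤ}
    (hj : 0 < j) : Hmap δ (m + j) - Hmap δ m ≤ M * (Hmap δ m - Hmap δ (m - j)) ∧
      Hmap δ m - Hmap δ (m - j) ≤ M * (Hmap δ (m + j) - Hmap δ m) := by
  obtain ⟨k, rfl⟩ : ∃ k : ℕ, j = (k + 1 : ℕ) := ⟨(j - 1).toNat, by omega⟩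
  have hN := Hmap_add_sub_Hmap δ m (k + 1)
  have hD := Hmap_sub_Hmap_sub δ m (k + 1)
  have h := hs m k
  rw [← hN, ← hD] at h
  exact ((one_div_le_div_and_div_le_iff (sub_pos.2 (Hmap_strictMono hpos (by omega))) hM).1
    h).symm

theorem le_mul_pred (hpos : ∀ n, 0 < δ n) (hM : 0 < M) (hs : ShearQS δ M) (m : ℤ) :
    δ m ≤ M * δ (m - 1) := by
  have h := (hs.Hmap_sub_le_mul_sub hpos hM m one_pos).1
  rwa [Hmap_succ, add_sub_cancel_left, Hmap_succ_sub_one] at h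

theorem pred_le_mul (hpos : ∀ n, 0 < δ n) (hM : 0 < M) (hs : ShearQS δ M) (m : ℤ) :
    δ (m - 1) ≤ M * δ m := by
  have h := (hs.Hmap_sub_le_mul_sub hpos hM m one_pos).2
  rwa [Hmap_succ, add_sub_cancel_left, Hmap_succ_sub_one] at h

theorem le_pow_mul (hpos : ∀ n, 0 < δ n) (hM : 0 < M) (hs : ShearQS δ M) (m : ℤ) (d : ℕ) :
    δ (m + d) ≤ M ^ d * δ m := by
  simpa using le_geom (u := fun k : ℕ => δ (m + k)) hM.le d fun k _ => by
    have h := hs.le_mul_pred hpos hM (m + k + 1)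
    rwa [add_sub_cancel_right, add_assoc] at h

theorem sub_le_pow_mul (hpos : ∀ n, 0 < δ n) (hM : 0 < M) (hs : ShearQS δ M) (m : ℤ) (d : ℕ) :
    δ (m - d) ≤ M ^ d * δ m := by
  simpa using le_geom (u := fun k : ℕ => δ (m - k)) hM.le d fun k _ => by
    simpa [sub_add_eq_sub_sub] using hs.pred_le_mul hpos hM (m - k)

theorem Hmap_sub_Hmap_sub_add_le (hpos : ∀ n, 0 < δ n) (hM : 0 < M) (hs : ShearQS δ M) (m : ℤ)
    {j : ℤ} (hj : 0 < j) (d : ℕ) : Hmap δ m - Hmap δ (m - j - d) ≤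
      (∑ i ∈ range (d + 1), M ^ i) * (Hmap δ m - Hmap δ (m - j)) := by
  set S := Hmap δ m - Hmap δ (m - j)
  have hterm : ∀ i ∈ range d, δ (m - j - 1 - i) ≤ M ^ (i + 1) * S := fun i _ => by
    have h := hs.sub_le_pow_mul hpos hM (m - j) (i + 1)
    rw [Nat.cast_succ, show m - j - (i + 1) = m - j - 1 - i by ring] at h
    exact h.trans (mul_le_mul_of_nonneg_left (le_Hmap_sub_Hmap_sub hpos m hj) (by positivity))
  calc Hmap δ m - Hmap δ (m - j - d) = S + ∑ i ∈ range d, δ (m - j - 1 - i) := by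
        rw [← Hmap_sub_Hmap_sub]; ring
    _ ≤ S + ∑ i ∈ range d, M ^ (i + 1) * S := by gcongr with i hi; exact hterm i hi
    _ = (∑ i ∈ range (d + 1), M ^ i) * S := by rw [sum_range_succ', add_mul, sum_mul]; ring

theorem hdev_add_sub_le_of_floor_le (hpos : ∀ n, 0 < δ n) (hM : 1 ≤ M) (hs : ShearQS δ M)
    {x t : ℝ} (ht : 0 < t) (hnear : ⌊x⌋ ≤ ⌊x - t⌋ + 1) :
    hdev δ (x + t) - hdev δ x ≤ M ^ 3 * (hdev δ x - hdev δ (x - t)) := by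
  have hM₀ : 0 < M := by linarith
  have hsum := floor_add_add_floor_sub_le x t
  have hN : hdev δ (x + t) - hdev δ x ≤ M ^ 2 * δ ⌊x⌋ * t := by
    have h := hdev_sub_le_mul_sub (c := M ^ 2 * δ ⌊x⌋) (show x ≤ x + t by linarith)
      fun j hj₁ hj₂ => by
        obtain ⟨d, rfl⟩ : ∃ d : ℕ, j = ⌊x⌋ + d := ⟨(j - ⌊x⌋).toNat, by omega⟩
        exact (hs.le_pow_mul hpos hM₀ _ d).trans
          (mul_le_mul_of_nonneg_right (pow_le_pow_right₀ hM (by omega)) (hpos _).le)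
    rwa [add_sub_cancel_left] at h
  have hD : δ ⌊x⌋ / M * t ≤ hdev δ x - hdev δ (x - t) := by
    have h := mul_sub_le_hdev_sub (c := δ ⌊x⌋ / M) (show x - t ≤ x by linarith)
      fun j hj₁ hj₂ => by
        rw [div_le_iff₀' hM₀]
        rcases (show j = ⌊x⌋ ∨ j = ⌊x⌋ - 1 by omega) with rfl | rfl
        · exact le_mul_of_one_le_left (hpos _).le hM
        · exact hs.le_mul_pred hpos hM₀ _
    rwa [sub_sub_cancel] at h
  calc hdev δ (x + t) - hdev δ x ≤ M ^ 2 * δ ⌊x⌋ * t := hN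
    _ = M ^ 3 * (δ ⌊x⌋ / M * t) := by field_simp
    _ ≤ M ^ 3 * (hdev δ x - hdev δ (x - t)) := by gcongr

theorem hdev_add_sub_le_of_floor_sub_le (hpos : ∀ n, 0 < δ n) (hM : 1 ≤ M) (hs : ShearQS δ M)
    {x t : ℝ} (hfar : ⌊x - t⌋ + 2 ≤ ⌊x⌋) (hbal : ⌊x + t⌋ - ⌊x⌋ ≤ ⌊x⌋ - ⌊x - t⌋) :
    hdev δ (x + t) - hdev δ x ≤ 3 * M ^ 3 * (hdev δ x - hdev δ (x - t)) := by
  have hM₀ : 0 < M := by linarith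
  set n := ⌊x⌋
  set q := n - ⌊x - t⌋
  have hN : hdev δ (x + t) - hdev δ x ≤ Hmap δ (n + (q + 1)) - Hmap δ n := by
    refine sub_le_sub (hdev_le_Hmap hpos ?_) (Hmap_floor_le_hdev hpos x)
    have : ⌊x + t⌋ + 1 ≤ n + (q + 1) := by omega
    exact (Int.lt_floor_add_one _).le.trans (by exact_mod_cast this)
  have hD : Hmap δ n - Hmap δ (n - (q - 1)) ≤ hdev δ x - hdev δ (x - t) := by
    refine sub_le_sub (Hmap_floor_le_hdev hpos x) (hdev_le_Hmap hpos ?_)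
    rw [show n - (q - 1) = ⌊x - t⌋ + 1 by omega]
    exact_mod_cast (Int.lt_floor_add_one (x - t)).le
  have hshear := (hs.Hmap_sub_le_mul_sub hpos hM₀ n (j := q + 1) (by omega)).1
  have htail := hs.Hmap_sub_Hmap_sub_add_le hpos hM₀ n (j := q - 1) (by omega) 2
  rw [show n - (q - 1) - (2 : ℕ) = n - (q + 1) by push_cast; ring] at htail
  have hS : 0 ≤ Hmap δ n - Hmap δ (n - (q - 1)) :=
    sub_nonneg.2 ((Hmap_strictMono hpos).monotone (by omega))
  have hM₃ : M * ∑ i ∈ range (2 + 1), M ^ i ≤ 3 * M ^ 3 := by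
    simp only [sum_range_succ, sum_range_zero]
    nlinarith
  calc hdev δ (x + t) - hdev δ x ≤ Hmap δ (n + (q + 1)) - Hmap δ n := hN
    _ ≤ M * (Hmap δ n - Hmap δ (n - (q + 1))) := hshear
    _ ≤ M * ((∑ i ∈ range (2 + 1), M ^ i) * (Hmap δ n - Hmap δ (n - (q - 1)))) := by
        gcongr
    _ ≤ 3 * M ^ 3 * (Hmap δ n - Hmap δ (n - (q - 1))) := by
        rw [← mul_assoc]; exact mul_le_mul_of_nonneg_right hM₃ hS
    _ ≤ 3 * M ^ 3 * (hdev δ x - hdev δ (x - t)) := by gcongr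

theorem hdev_add_sub_le_of_floor_sub_eq (hpos : ∀ n, 0 < δ n) (hM : 1 ≤ M) (hs : ShearQS δ M)
    {x t : ℝ} (hfar : ⌊x - t⌋ + 2 ≤ ⌊x⌋) (hunbal : ⌊x + t⌋ - ⌊x⌋ = ⌊x⌋ - ⌊x - t⌋ + 1) :
    hdev δ (x + t) - hdev δ x ≤ 3 * M ^ 3 * (hdev δ x - hdev δ (x - t)) := by
  have hM₀ : 0 < M := by linarith
  set n := ⌊x⌋
  set q := n - ⌊x - t⌋
  set u := x - n
  have hu : 1 / 2 ≤ u := by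
    have h : ((⌊x + t⌋ + ⌊x - t⌋ : ℤ) : ℝ) = 2 * n + 1 := by
      rw [show ⌊x + t⌋ + ⌊x - t⌋ = 2 * n + 1 by omega]; push_cast; ring
    push_cast at h
    linarith [Int.floor_le (x + t), Int.floor_le (x - t)]
  have hN : hdev δ (x + t) - hdev δ x ≤ Hmap δ (n + 1 + (q + 1)) - hdev δ x := by
    refine sub_le_sub_right (hdev_le_Hmap hpos ?_) _
    have : ⌊x + t⌋ + 1 = n + 1 + (q + 1) := by omega
    exact (Int.lt_floor_add_one _).le.trans (by exact_mod_cast this.le)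
  have hD : hdev δ x - Hmap δ (n - (q - 1)) ≤ hdev δ x - hdev δ (x - t) := by
    refine sub_le_sub_left (hdev_le_Hmap hpos ?_) _
    rw [show n - (q - 1) = ⌊x - t⌋ + 1 by omega]
    exact_mod_cast (Int.lt_floor_add_one (x - t)).le
  have hshear := (hs.Hmap_sub_le_mul_sub hpos hM₀ (n + 1) (j := q + 1) (by omega)).1
  have htail := hs.Hmap_sub_Hmap_sub_add_le hpos hM₀ n (j := q - 1) (by omega) 1
  rw [show n + 1 - (q + 1) = n - (q - 1) - (1 : ℕ) by push_cast; ring] at hshear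
  simp only [sum_range_succ, sum_range_zero, zero_add, pow_zero, pow_one] at htail
  have hS : 0 ≤ Hmap δ n - Hmap δ (n - (q - 1)) :=
    sub_nonneg.2 ((Hmap_strictMono hpos).monotone (by omega))
  have hx : hdev δ x = Hmap δ n + δ n * u := rfl
  have hsucc := Hmap_succ δ n
  have hM₃ : M ≤ M ^ 3 := le_self_pow₀ hM (by norm_num)
  have hδ : (M + 1 - u) * δ n ≤ 3 * M ^ 3 * u * δ n :=
    mul_le_mul_of_nonneg_right (by nlinarith) (hpos n).le
  have hS' : (M + M ^ 2) * (Hmap δ n - Hmap δ (n - (q - 1))) ≤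
      3 * M ^ 3 * (Hmap δ n - Hmap δ (n - (q - 1))) :=
    mul_le_mul_of_nonneg_right (by nlinarith) hS
  have hMtail := mul_le_mul_of_nonneg_left htail hM₀.le
  calc hdev δ (x + t) - hdev δ x ≤ Hmap δ (n + 1 + (q + 1)) - hdev δ x := hN
    _ ≤ 3 * M ^ 3 * (hdev δ x - Hmap δ (n - (q - 1))) := by
        rw [hx]; rw [hsucc] at hshear; linarith
    _ ≤ 3 * M ^ 3 * (hdev δ x - hdev δ (x - t)) := by gcongr

theorem hdev_add_sub_le (hpos : ∀ n, 0 < δ n) (hM : 1 ≤ M) (hs : ShearQS δ M) (x : ℝ) {t : ℝ}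
    (ht : 0 < t) : hdev δ (x + t) - hdev δ x ≤ 3 * M ^ 3 * (hdev δ x - hdev δ (x - t)) := by
  have hsum := floor_add_add_floor_sub_le x t
  rcases le_or_gt ⌊x⌋ (⌊x - t⌋ + 1) with hnear | hfar
  · have hD : 0 ≤ hdev δ x - hdev δ (x - t) :=
      sub_nonneg.2 ((hdev_strictMono hpos).monotone (by linarith))
    calc hdev δ (x + t) - hdev δ x ≤ M ^ 3 * (hdev δ x - hdev δ (x - t)) :=
          hs.hdev_add_sub_le_of_floor_le hpos hM ht hnear
      _ ≤ 3 * M ^ 3 * (hdev δ x - hdev δ (x - t)) := by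
          gcongr; linarith [pow_nonneg (zero_le_one.trans hM) 3]
  rcases le_or_gt (⌊x + t⌋ - ⌊x⌋) (⌊x⌋ - ⌊x - t⌋) with hbal | hunbal
  · exact hs.hdev_add_sub_le_of_floor_sub_le hpos hM (by omega) hbal
  · exact hs.hdev_add_sub_le_of_floor_sub_eq hpos hM (by omega) (by omega)

theorem hdev_sub_sub_le (hpos : ∀ n, 0 < δ n) (hM : 1 ≤ M) (hs : ShearQS δ M) (x : ℝ) {t : ℝ}
    (ht : 0 < t) : hdev δ x - hdev δ (x - t) ≤ 3 * M ^ 3 * (hdev δ (x + t) - hdev δ x) := by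
  have h := (hs.reflect (by linarith)).hdev_add_sub_le (fun n => hpos _) hM (-x) ht
  rw [hdev_reflect, hdev_reflect, hdev_reflect, neg_neg, show -(-x + t) = x - t by ring,
    show -(-x - t) = x + t by ring] at h
  linarith

theorem qsCond_hdev (hpos : ∀ n, 0 < δ n) (hM : 1 ≤ M) (hs : ShearQS δ M) :
    QSCond (hdev δ) (3 * M ^ 3) :=
  qsCond_of_le_mul (hdev_strictMono hpos) (by positivity) fun x t ht =>
    ⟨hs.hdev_add_sub_le hpos hM x ht, hs.hdev_sub_sub_le hpos hM x ht⟩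

end ShearQS

theorem shear_characterization_single_fan (δ : ℤ → ℝ) (hpos : ∀ n, 0 < δ n) :
    ((∃ M : ℝ, 1 ≤ M ∧ ShearQS δ M) ↔ (∃ M' : ℝ, 1 ≤ M' ∧ QSCond (hdev δ) M')) ∧
      (∀ M' : ℝ, 1 ≤ M' → QSCond (hdev δ) M' → ShearQS δ M') ∧
      (∀ M : ℝ, 1 ≤ M → ShearQS δ M → QSCond (hdev δ) (max (3 * M ^ 3) (M ^ 10))) := by
  have hqs : ∀ M : ℝ, 1 ≤ M → ShearQS δ M → QSCond (hdev δ) (max (3 * M ^ 3) (M ^ 10)) :=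
    fun M hM hs => (hs.qsCond_hdev hpos hM).mono (by positivity) (le_max_left _ _)
  refine ⟨⟨fun ⟨M, hM, hs⟩ => ⟨_, ?_, hqs M hM hs⟩,
    fun ⟨M', hM', hq⟩ => ⟨M', hM', shearQS_of_qsCond_hdev hq⟩⟩,
    fun _ _ => shearQS_of_qsCond_hdev, hqs⟩
  exact le_max_of_le_left (by nlinarith [one_le_pow₀ (n := 3) hM])
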